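/- arXiv:2101.12480 — 3 statements merged into one kernel-verified Lean document; each statement's English description precedes it below -/
import Mathlib

section
/- Let N ≥ 1 and 1 ≤ i, j ≤ N. With d(k) as the indicator sequence defined by d(k+2N) = d(k) for all k ≥ 0, d(k+N) = d'(k) where d' is the analogous sequence with i replaced by N+1-i, and d(k) = 1 if and only if |i-j| ≤ k ≤ N-1-|N+1-i-j| and k ≡ |i-j| (mod 2) for 0 ≤ k ≤ N-1: the total number of k in {0, 1, ..., 2N-1} with d(k) = 1 equals 2·min(i, j, N+1-i, N+1-j). -/
/-- Counting one half-period. -/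
lemma count_half (N : ℕ) (hN : 1 ≤ N) (i j : ℤ) (hi : 1 ≤ i) (hiN : i ≤ (N : ℤ))
    (hj : 1 ≤ j) (hjN : j ≤ (N : ℤ))
    (p : ℕ → Prop) [DecidablePred p]
    (hp : ∀ k : ℕ, k < N → (p k ↔
      (|i - j| ≤ (k : ℤ) ∧ (k : ℤ) ≤ (N : ℤ) - 1 - |(N : ℤ) + 1 - i - j|
        ∧ (k : ℤ) % 2 = |i - j| % 2))) :
    ((Finset.range N).filter p).card
      = (min (min i j) (min ((N : ℤ) + 1 - i) ((N : ℤ) + 1 - j))).toNat := by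
  set A : ℕ := (i - j).natAbs with hA
  set m : ℕ := (min (min i j) (min ((N : ℤ) + 1 - i) ((N : ℤ) + 1 - j))).toNat with hm
  have habs1 : |i - j| = ((i - j).natAbs : ℤ) := Int.abs_eq_natAbs _
  have habs2 : |(N : ℤ) + 1 - i - j| = (((N : ℤ) + 1 - i - j).natAbs : ℤ) :=
    Int.abs_eq_natAbs _
  have himg : (Finset.range N).filter p
      = Finset.image (fun t => A + 2 * t) (Finset.range m) := by
    ext k
    simp only [Finset.mem_filter, Finset.mem_range, Finset.mem_image]
    constructor
    · rintro ⟨hkN, hpk⟩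
      rw [hp k hkN, habs1, habs2] at hpk
      exact ⟨(k - A) / 2, by omega, by omega⟩
    · rintro ⟨t, ht, rfl⟩
      have hkN : A + 2 * t < N := by omega
      refine ⟨hkN, ?_⟩
      rw [hp _ hkN, habs1, habs2]
      constructor
      · omega
      constructor
      · omega
      · omega
  rw [himg, Finset.card_image_of_injective _ (fun a b h => by omega), Finset.card_range]

/-- Over one full period `{0, …, 2N-1}`, the number of degrees `k` with
`Ext^k(S_i,S_j) ≠ 0` (encoded by the indicator condition) equals
`2 · min(i, j, N+1-i, N+1-j)`. -/
theorem stmt3 (N : ℕ) (hN : 1 ≤ N) (i j : ℤ) (hi : 1 ≤ i) (hiN : i ≤ (N : ℤ))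
    (hj : 1 ≤ j) (hjN : j ≤ (N : ℤ))
    (C : ℤ → ℤ → Prop)
    (hC : ∀ a k : ℤ, C a k ↔
      (|a - j| ≤ k ∧ k ≤ (N : ℤ) - 1 - |(N : ℤ) + 1 - a - j| ∧ k % 2 = |a - j| % 2))
    (d : ℕ → Prop) [DecidablePred d]
    (hd : ∀ k : ℕ, k < 2 * N →
      (d k ↔ (if k < N then C i (k : ℤ) else C ((N : ℤ) + 1 - i) ((k : ℤ) - (N : ℤ))))) :
    (((Finset.range (2 * N)).filter d).card : ℤ)
      = 2 * min (min i j) (min ((N : ℤ) + 1 - i) ((N : ℤ) + 1 - j)) := by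
  haveI : DecidablePred (fun k : ℕ => d (k + N)) :=
    fun k => inferInstanceAs (Decidable (d (k + N)))
  -- split the range
  have hsplit : (Finset.range (2 * N)).filter d
      = ((Finset.range N).filter d) ∪
        (Finset.image (fun t => t + N) ((Finset.range N).filter (fun k => d (k + N)))) := by
    ext k
    simp only [Finset.mem_filter, Finset.mem_range, Finset.mem_union, Finset.mem_image]
    constructor
    · rintro ⟨hk, hdk⟩
      by_cases h : k < N
      · exact Or.inl ⟨h, hdk⟩
      · exact Or.inr ⟨k - N, ⟨by omega, by rwa [Nat.sub_add_cancel (by omega)]⟩, by omega⟩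
    · rintro (⟨hk, hdk⟩ | ⟨t, ⟨ht, hdt⟩, rfl⟩)
      · exact ⟨by omega, hdk⟩
      · exact ⟨by omega, hdt⟩
  have hdisj : Disjoint ((Finset.range N).filter d)
      (Finset.image (fun t => t + N) ((Finset.range N).filter (fun k => d (k + N)))) := by
    rw [Finset.disjoint_left]
    intro k hk hk'
    simp only [Finset.mem_filter, Finset.mem_range, Finset.mem_image] at hk hk'
    obtain ⟨t, _, rfl⟩ := hk'
    omega
  have hcard1 : ((Finset.range N).filter d).card
      = (min (min i j) (min ((N : ℤ) + 1 - i) ((N : ℤ) + 1 - j))).toNat := by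
    apply count_half N hN i j hi hiN hj hjN
    intro k hk
    rw [hd k (by omega), if_pos hk, hC]
  have hcard2 : ((Finset.range N).filter (fun k => d (k + N))).card
      = (min (min i j) (min ((N : ℤ) + 1 - i) ((N : ℤ) + 1 - j))).toNat := by
    have := count_half N hN ((N : ℤ) + 1 - i) j (by omega) (by omega) hj hjN
      (fun k => d (k + N)) (fun k hk => by
        show d (k + N) ↔ _
        have h1 : ((k + N : ℕ) : ℤ) - (N : ℤ) = (k : ℤ) := by push_cast; ring
        rw [hd (k + N) (by omega), if_neg (by omega), hC, h1])
    rw [this]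
    congr 1
    omega
  rw [hsplit, Finset.card_union_of_disjoint hdisj,
    Finset.card_image_of_injective _ (fun a b h => by omega), hcard1, hcard2]
  omega
end

section
/- Let Γ be the path algebra over a field F of the quiver with vertices 1, ..., N, arrows xᵢ : i → i+1 and xᵢ* : i+1 → i for 1 ≤ i ≤ N−1, modulo the relations x₁x₁* = 0, x_{N-1}* x_{N-1} = 0, and xᵢ* xᵢ = x_{i+1} x_{i+1}* for 1 ≤ i ≤ N−2 (concatenation notation). Then for 1 ≤ i, j ≤ N and k ≥ 0, the space e_i Γ_k e_j of paths of length k from i to j has dimension 1 if |i−j| ≤ k ≤ N−1−|N+1−i−j| and k ≡ i−j (mod 2), and dimension 0 otherwise. -/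
/-! Path algebra of the doubled `A_N` quiver, modulo the Brauer-line relations
`x₁x₁* = 0`, `x_{N-1}*x_{N-1} = 0`, `xᵢ*xᵢ = x_{i+1}x_{i+1}*`.
A path from vertex `i` is encoded by its list of steps (`true` = `x` going up,
`false` = `x*` going down, concatenation-of-paths convention). -/

/-- All vertices visited by the step list `L` starting at `i` lie in `{1, …, N}`. -/
def okSteps (N : ℕ) : ℤ → List Bool → Prop
  | i, [] => 1 ≤ i ∧ i ≤ (N : ℤ)
  | i, b :: L => 1 ≤ i ∧ i ≤ (N : ℤ) ∧ okSteps N (if b then i + 1 else i - 1) L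

/-- The endpoint of the step list `L` starting at `i`. -/
def targetV : ℤ → List Bool → ℤ
  | i, [] => i
  | i, b :: L => targetV (if b then i + 1 else i - 1) L

/-- `L` encodes a path in the doubled `A_N` quiver from `i` to `j` of length `k`. -/
def IsPathFrom (N : ℕ) (i j : ℤ) (k : ℕ) (L : List Bool) : Prop :=
  okSteps N i L ∧ targetV i L = j ∧ L.length = k

/-- The set of paths from `i` to `j` of length `k`, a basis of `e_i (FQ)_k e_j`. -/
def PathIdx (N : ℕ) (i j : ℤ) (k : ℕ) : Type :=
  {L : List Bool // IsPathFrom N i j k L}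

/-- The relators spanning the degree-`k`, `(i,j)`-component of the ideal
`⟨x₁x₁*, x_{N-1}*x_{N-1}, xᵢ*xᵢ - x_{i+1}x_{i+1}*⟩` inside `e_i (FQ)_k e_j`:
a path containing `x₁x₁*` (up-down at vertex `1`) or `x_{N-1}*x_{N-1}` (down-up at
vertex `N`) is a relator, and so is the difference of two paths related by swapping a
down-up at an interior vertex into the corresponding up-down. -/
def relators (F : Type*) [Field F] (N : ℕ) (i j : ℤ) (k : ℕ) :
    Set (PathIdx N i j k →₀ F) :=
  {v | ∃ A B : List Bool,
    (∃ h : IsPathFrom N i j k (A ++ [true, false] ++ B),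
      targetV i A = 1 ∧ v = Finsupp.single ⟨A ++ [true, false] ++ B, h⟩ 1) ∨
    (∃ h : IsPathFrom N i j k (A ++ [false, true] ++ B),
      targetV i A = (N : ℤ) ∧ v = Finsupp.single ⟨A ++ [false, true] ++ B, h⟩ 1) ∨
    (∃ (h1 : IsPathFrom N i j k (A ++ [false, true] ++ B))
        (h2 : IsPathFrom N i j k (A ++ [true, false] ++ B)),
      2 ≤ targetV i A ∧ targetV i A ≤ (N : ℤ) - 1 ∧
      v = Finsupp.single ⟨A ++ [false, true] ++ B, h1⟩ 1
          - Finsupp.single ⟨A ++ [true, false] ++ B, h2⟩ 1)}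

/-- The component `e_i Γ_k e_j` of the quotient path algebra `Γ = FQ/⟨I⟩`. -/
def PathComp (F : Type*) [Field F] (N : ℕ) (i j : ℤ) (k : ℕ) :=
  (PathIdx N i j k →₀ F) ⧸ Submodule.span F (relators F N i j k)

noncomputable instance (F : Type*) [Field F] (N : ℕ) (i j : ℤ) (k : ℕ) :
    AddCommGroup (PathComp F N i j k) :=
  Submodule.Quotient.addCommGroup _

noncomputable instance (F : Type*) [Field F] (N : ℕ) (i j : ℤ) (k : ℕ) :
    Module F (PathComp F N i j k) :=
  Submodule.Quotient.module _

/-- The class of a path in `e_i Γ_k e_j`. -/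
noncomputable def pathClass (F : Type*) [Field F] {N : ℕ} {i j : ℤ} {k : ℕ} (p : PathIdx N i j k) :
    PathComp F N i j k :=
  Submodule.Quotient.mk (Finsupp.single p 1)

/-! Orienting the relation `xᵢ*xᵢ = x_{i+1}x_{i+1}*` one way or the other rewrites every path,
modulo the relators, to zero or to a path of the shape `x*⋯x*x⋯x` (resp. `x⋯xx*⋯x*`). Such a
path is unique, and it exists iff `|i - j| ≤ k`, `k ≡ i - j (mod 2)` and its turning vertex
`(i + j ∓ k)/2` lies in `[1, N]`; together the two orientations give exactly the stated window.
Outside the window the quotient is therefore zero. Inside it, it is spanned by the class of the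
`x*⋯x*x⋯x` path, which is nonzero because the window is too short for a path to reach a zero
relation, so the sum of coefficients vanishes on all relators. -/

section PathCombinatorics

lemma okSteps_bounds {N : ℕ} {i : ℤ} {L : List Bool} (h : okSteps N i L) : 1 ≤ i ∧ i ≤ N := by
  cases L with
  | nil => exact h
  | cons _ _ => exact ⟨h.1, h.2.1⟩

lemma targetV_append (A B : List Bool) (v : ℤ) :
    targetV v (A ++ B) = targetV (targetV v A) B := by
  induction A generalizing v with
  | nil => rfl
  | cons a A ih => exact ih _

lemma okSteps_append (N : ℕ) (A B : List Bool) (v : ℤ) :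
    okSteps N v (A ++ B) ↔ okSteps N v A ∧ okSteps N (targetV v A) B := by
  induction A generalizing v with
  | nil => exact ⟨fun h => ⟨okSteps_bounds h, h⟩, And.right⟩
  | cons a A ih => simp only [List.cons_append, okSteps, targetV, ih, and_assoc]

lemma targetV_replicate (n : ℕ) (b : Bool) (v : ℤ) :
    targetV v (List.replicate n b) = if b then v + n else v - n := by
  induction n generalizing v with
  | zero => simp [targetV]
  | succ n ih =>
    cases b <;>
      simp only [List.replicate_succ, targetV, ih, Bool.false_eq_true, ↓reduceIte, Nat.cast_add,
        Nat.cast_one] <;>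
      ring

lemma okSteps_replicate (N : ℕ) (n : ℕ) (b : Bool) (v : ℤ) :
    okSteps N v (List.replicate n b) ↔
      (1 ≤ v ∧ v ≤ N) ∧
        1 ≤ targetV v (List.replicate n b) ∧ targetV v (List.replicate n b) ≤ N := by
  rw [targetV_replicate]
  induction n generalizing v with
  | zero => simp [okSteps]
  | succ n ih =>
    cases b <;>
      simp only [List.replicate_succ, okSteps, ih, Bool.false_eq_true, ↓reduceIte, Nat.cast_add,
        Nat.cast_one] <;>
      omega

lemma abs_targetV_sub_le (L : List Bool) (v : ℤ) : |targetV v L - v| ≤ L.length := by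
  induction L generalizing v with
  | nil => simp [targetV]
  | cons b L ih =>
    have := abs_le.1 (ih (if b then v + 1 else v - 1))
    rw [targetV, List.length_cons, Nat.cast_succ, abs_le]
    split_ifs at this ⊢ <;> omega

lemma targetV_pair_append (b : Bool) (v : ℤ) (B : List Bool) :
    targetV v ([b, !b] ++ B) = targetV v B := by
  cases b <;> simp [targetV]

lemma okSteps_pair_append (N : ℕ) (b : Bool) (v : ℤ) (B : List Bool) :
    okSteps N v ([b, !b] ++ B) ↔
      1 ≤ v ∧ v ≤ N ∧ 1 ≤ (if b then v + 1 else v - 1) ∧ (if b then v + 1 else v - 1) ≤ N ∧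
        okSteps N v B := by
  cases b <;> simp [okSteps]

end PathCombinatorics

section NormalForms

/-- For `c = true` the paths that first go down and then up, for `c = false` the reverse:
the normal forms for the rewriting `[c, !c] ↦ [!c, c]`. -/
def IsNormalForm (c : Bool) (L : List Bool) : Prop :=
  ∃ a b : ℕ, L = List.replicate b (!c) ++ List.replicate a c

lemma isNormalForm_or_exists_eq_pair_append (c : Bool) (L : List Bool) :
    IsNormalForm c L ∨ ∃ A B : List Bool, L = A ++ [c, !c] ++ B := by
  induction L with
  | nil => exact Or.inl ⟨0, 0, rfl⟩
  | cons d L ih =>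
    rcases ih with ⟨a, b, rfl⟩ | ⟨A, B, rfl⟩
    · by_cases hd : d = c
      · subst hd
        cases b with
        | zero => exact Or.inl ⟨a + 1, 0, by simp [List.replicate_succ]⟩
        | succ b =>
          exact Or.inr ⟨[], List.replicate b (!d) ++ List.replicate a d,
            by simp [List.replicate_succ]⟩
      · have hd : d = !c := by cases c <;> cases d <;> simp_all
        exact Or.inl ⟨a, b + 1, by simp [hd, List.replicate_succ]⟩
    · exact Or.inr ⟨d :: A, B, rfl⟩

/-- The termination measure of the rewriting `[c, !c] ↦ [!c, c]`. -/
def tailWeight (c : Bool) : List Bool → ℕ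
  | [] => 0
  | a :: L => (if a = c then L.length else 0) + tailWeight c L

lemma tailWeight_swap_lt (c : Bool) (A B : List Bool) :
    tailWeight c (A ++ [!c, c] ++ B) < tailWeight c (A ++ [c, !c] ++ B) := by
  induction A with
  | nil => cases c <;> simp [tailWeight]
  | cons a A ih =>
    simp only [List.cons_append, tailWeight, List.length_append, List.length_cons] at ih ⊢
    omega

end NormalForms

section Rewriting

variable {F : Type*} [Field F] {N : ℕ} {i j : ℤ} {k : ℕ}

lemma isPathFrom_swap {A B : List Bool} {b : Bool} (hp : IsPathFrom N i j k (A ++ [b, !b] ++ B))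
    (h2 : 2 ≤ targetV i A) (hN : targetV i A ≤ N - 1) :
    IsPathFrom N i j k (A ++ [!b, b] ++ B) := by
  obtain ⟨hok, htgt, hlen⟩ := hp
  rw [List.append_assoc, okSteps_append, okSteps_pair_append] at hok
  rw [List.append_assoc, targetV_append, targetV_pair_append] at htgt
  have hpair : [!b, b] = [!b, !!b] := by rw [Bool.not_not]
  refine ⟨?_, ?_, by simpa using hlen⟩
  · rw [List.append_assoc, okSteps_append, hpair, okSteps_pair_append]
    obtain ⟨hokA, -, -, hv1, hvN, hokB⟩ := hok
    cases b <;>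
      simp only [Bool.not_true, Bool.not_false, Bool.false_eq_true, ↓reduceIte] at hv1 hvN ⊢ <;>
      exact ⟨hokA, by omega, by omega, by omega, by omega, hokB⟩
  · rwa [List.append_assoc, targetV_append, hpair, targetV_pair_append]

lemma single_sub_single_swap_mem_span {A B : List Bool} {b : Bool}
    (hp : IsPathFrom N i j k (A ++ [b, !b] ++ B)) (hq : IsPathFrom N i j k (A ++ [!b, b] ++ B))
    (h2 : 2 ≤ targetV i A) (hN : targetV i A ≤ N - 1) :
    Finsupp.single ⟨_, hp⟩ (1 : F) - Finsupp.single ⟨_, hq⟩ 1 ∈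
      Submodule.span F (relators F N i j k) := by
  cases b
  · exact Submodule.subset_span ⟨A, B, Or.inr (Or.inr ⟨hp, hq, h2, hN, rfl⟩)⟩
  · rw [← neg_sub]
    exact Submodule.neg_mem _
      (Submodule.subset_span ⟨A, B, Or.inr (Or.inr ⟨hq, hp, h2, hN, rfl⟩)⟩)

lemma single_mem_relators_or_interior {A B : List Bool} {c : Bool}
    (hp : IsPathFrom N i j k (A ++ [c, !c] ++ B)) :
    Finsupp.single ⟨_, hp⟩ (1 : F) ∈ relators F N i j k ∨
      2 ≤ targetV i A ∧ targetV i A ≤ N - 1 := by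
  have hok := hp.1
  rw [List.append_assoc, okSteps_append, okSteps_pair_append] at hok
  cases c
  · by_cases hv : targetV i A = N
    · exact Or.inl ⟨A, B, Or.inr (Or.inl ⟨hp, hv, rfl⟩)⟩
    · right
      simp only [Bool.false_eq_true, ↓reduceIte] at hok
      omega
  · by_cases hv : targetV i A = 1
    · exact Or.inl ⟨A, B, Or.inl ⟨hp, hv, rfl⟩⟩
    · right
      simp only [↓reduceIte] at hok
      omega

lemma single_mem_span_relators_union_normalForms (c : Bool) (p : PathIdx N i j k) :
    Finsupp.single p (1 : F) ∈ Submodule.span F (relators F N i j k ∪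
      (fun q => Finsupp.single q 1) '' {q : PathIdx N i j k | IsNormalForm c q.1}) := by
  induction hn : tailWeight c p.1 using Nat.strong_induction_on generalizing p with
  | _ n ih =>
  obtain ⟨L, hL⟩ := p
  rcases isNormalForm_or_exists_eq_pair_append c L with hnf | ⟨A, B, rfl⟩
  · exact Submodule.subset_span (Or.inr ⟨_, hnf, rfl⟩)
  rcases single_mem_relators_or_interior (F := F) hL with hrel | ⟨h2, hN⟩
  · exact Submodule.subset_span (Or.inl hrel)
  have hq := isPathFrom_swap hL h2 hN
  have hsum := Submodule.add_mem _
    (Submodule.span_mono Set.subset_union_left (single_sub_single_swap_mem_span hL hq h2 hN))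
    (ih _ (hn ▸ tailWeight_swap_lt c A B) (⟨_, hq⟩ : PathIdx N i j k) rfl)
  rwa [sub_add_cancel] at hsum

lemma span_relators_union_normalForms_eq_top (c : Bool) :
    Submodule.span F (relators F N i j k ∪
      (fun q => Finsupp.single q 1) '' {q : PathIdx N i j k | IsNormalForm c q.1}) = ⊤ := by
  refine Submodule.eq_top_iff'.2 fun v => ?_
  induction v using Finsupp.induction_linear with
  | zero => exact Submodule.zero_mem _
  | add f g hf hg => exact Submodule.add_mem _ hf hg
  | single p a =>
    rw [← mul_one a, ← smul_eq_mul, ← Finsupp.smul_single]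
    exact Submodule.smul_mem _ a (single_mem_span_relators_union_normalForms c p)

end Rewriting

section Dimension

variable {F : Type*} [Field F] {N : ℕ} {i j : ℤ} {k : ℕ}

lemma isPathFrom_normalForm_iff (c : Bool) (a b : ℕ) :
    IsPathFrom N i j k (List.replicate b (!c) ++ List.replicate a c) ↔
      (if c then i - b + a else i + b - a) = j ∧ a + b = k ∧ 1 ≤ i ∧ i ≤ N ∧
        1 ≤ (if c then i - b else i + b) ∧ (if c then i - b else i + b) ≤ N ∧ 1 ≤ j ∧ j ≤ N := by
  simp only [IsPathFrom, okSteps_append, okSteps_replicate, targetV_append, targetV_replicate,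
    List.length_append, List.length_replicate]
  cases c <;> simp only [Bool.not_true, Bool.not_false, Bool.false_eq_true, ↓reduceIte] <;> omega

lemma PathIdx.eq_of_isNormalForm {c : Bool} {p q : PathIdx N i j k} (hp : IsNormalForm c p.1)
    (hq : IsNormalForm c q.1) : p = q := by
  obtain ⟨_, hp'⟩ := p
  obtain ⟨_, hq'⟩ := q
  obtain ⟨a, b, rfl⟩ := hp
  obtain ⟨a', b', rfl⟩ := hq
  have hp'' := (isPathFrom_normalForm_iff c a b).1 hp'
  have hq'' := (isPathFrom_normalForm_iff c a' b').1 hq'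
  obtain ⟨rfl, rfl⟩ : a = a' ∧ b = b' := by
    cases c <;> simp only [Bool.false_eq_true, ↓reduceIte] at hp'' hq'' <;> omega
  rfl

lemma bounds_of_isNormalForm_true {p : PathIdx N i j k} (hp : IsNormalForm true p.1) :
    |i - j| ≤ k ∧ (k : ℤ) % 2 = (i - j) % 2 ∧ k + 2 ≤ i + j := by
  obtain ⟨_, hp'⟩ := p
  obtain ⟨a, b, rfl⟩ := hp
  rw [isPathFrom_normalForm_iff] at hp'
  simp only [if_true] at hp'
  rw [abs_le]
  omega

lemma le_of_isNormalForm_false {p : PathIdx N i j k} (hp : IsNormalForm false p.1) :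
    k + i + j ≤ 2 * N := by
  obtain ⟨_, hp'⟩ := p
  obtain ⟨a, b, rfl⟩ := hp
  rw [isPathFrom_normalForm_iff] at hp'
  simp only [Bool.false_eq_true, if_false] at hp'
  omega

lemma exists_isNormalForm_true (hij : |i - j| ≤ k) (hpar : (k : ℤ) % 2 = (i - j) % 2)
    (hlow : k + 2 ≤ i + j) (hhigh : k + i + j ≤ 2 * N) :
    ∃ p : PathIdx N i j k, IsNormalForm true p.1 := by
  rw [abs_le] at hij
  obtain ⟨a, b, ha, hb⟩ : ∃ a b : ℕ, 2 * (a : ℤ) = k + j - i ∧ 2 * (b : ℤ) = k + i - j :=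
    ⟨((k + j - i) / 2).toNat, ((k + i - j) / 2).toNat, by omega, by omega⟩
  have hp : IsPathFrom N i j k (List.replicate b (!true) ++ List.replicate a true) := by
    rw [isPathFrom_normalForm_iff]
    simp only [if_true]
    omega
  exact ⟨⟨_, hp⟩, a, b, rfl⟩

lemma length_le_of_isPathFrom_pair_append {A B : List Bool} {b : Bool}
    (hp : IsPathFrom N i j k (A ++ [b, !b] ++ B)) :
    |targetV i A - i| + |j - targetV i A| + 2 ≤ k := by
  obtain ⟨-, htgt, hlen⟩ := hp
  rw [List.append_assoc, targetV_append, targetV_pair_append] at htgt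
  have hA := abs_targetV_sub_le A i
  have hB := abs_targetV_sub_le B (targetV i A)
  rw [htgt] at hB
  simp only [List.length_append, List.length_cons, List.length_nil] at hlen
  omega

/-- Inside the window no path passes through a zero relation, so every relator is a
difference of two paths. -/
lemma span_relators_le_ker_sum (hlow : k + 2 ≤ i + j) (hhigh : k + i + j ≤ 2 * N) :
    Submodule.span F (relators F N i j k) ≤
      LinearMap.ker (Finsupp.linearCombination F fun _ => (1 : F)) := by
  rw [Submodule.span_le]
  rintro _ ⟨A, B, ⟨hp, hA, rfl⟩ | ⟨hp, hA, rfl⟩ | ⟨hp, hq, -, -, rfl⟩⟩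
  · have hlen := length_le_of_isPathFrom_pair_append (b := true) hp
    rw [hA] at hlen
    linarith [neg_le_abs (1 - i), le_abs_self (j - 1)]
  · have hlen := length_le_of_isPathFrom_pair_append (b := false) hp
    rw [hA] at hlen
    linarith [le_abs_self ((N : ℤ) - i), neg_le_abs (j - N)]
  · have hsum (p q : PathIdx N i j k) : Finsupp.single p (1 : F) - Finsupp.single q 1 ∈
        LinearMap.ker (Finsupp.linearCombination F fun _ => (1 : F)) := by simp
    exact hsum _ _

lemma finrank_pathComp_eq_one {p₀ : PathIdx N i j k} (hp₀ : IsNormalForm true p₀.1)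
    (hlow : k + 2 ≤ i + j) (hhigh : k + i + j ≤ 2 * N) :
    Module.finrank F (PathComp F N i j k) = 1 := by
  refine finrank_eq_one (pathClass F p₀) ?_ fun w => ?_
  · intro h
    have := span_relators_le_ker_sum hlow hhigh ((Submodule.Quotient.mk_eq_zero _).1 h)
    simp at this
  · obtain ⟨v, rfl⟩ := Submodule.Quotient.mk_surjective _ w
    have hv : v ∈ Submodule.span F (insert (Finsupp.single p₀ 1) (relators F N i j k)) := by
      refine Submodule.span_mono ?_ ((span_relators_union_normalForms_eq_top true).ge trivial)
      rintro _ (hrel | ⟨q, hq, rfl⟩)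
      · exact Or.inr hrel
      · exact Or.inl (by rw [PathIdx.eq_of_isNormalForm hq hp₀])
    obtain ⟨c, z, hz, rfl⟩ := Submodule.mem_span_insert.1 hv
    refine ⟨c, ?_⟩
    rw [Submodule.Quotient.mk_add, Submodule.Quotient.mk_smul,
      (Submodule.Quotient.mk_eq_zero _).2 hz, add_zero]
    rfl

lemma finrank_pathComp_eq_zero (c : Bool) (h : ∀ p : PathIdx N i j k, ¬IsNormalForm c p.1) :
    Module.finrank F (PathComp F N i j k) = 0 := by
  have htop := span_relators_union_normalForms_eq_top (F := F) (N := N) (i := i) (j := j) (k := k) c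
  simp only [Set.ofPred_false, h, Set.image_empty, Set.union_empty] at htop
  have : Subsingleton (PathComp F N i j k) := Submodule.Quotient.subsingleton_iff.2 htop
  exact Module.finrank_zero_of_subsingleton

end Dimension

lemma nonvanishing_condition_iff (N : ℕ) (i j : ℤ) (k : ℕ) :
    (|i - j| ≤ (k : ℤ) ∧ (k : ℤ) ≤ (N : ℤ) - 1 - |(N : ℤ) + 1 - i - j| ∧
        (k : ℤ) % 2 = (i - j) % 2) ↔
      (|i - j| ≤ k ∧ (k : ℤ) % 2 = (i - j) % 2 ∧ k + 2 ≤ i + j) ∧ k + i + j ≤ 2 * N := by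
  rw [le_sub_comm, abs_le, abs_le]
  omega

theorem stmt6_general (F : Type*) [Field F] (N : ℕ) (i j : ℤ) (k : ℕ) :
    Module.finrank F (PathComp F N i j k) =
      if |i - j| ≤ (k : ℤ) ∧ (k : ℤ) ≤ (N : ℤ) - 1 - |(N : ℤ) + 1 - i - j|
          ∧ (k : ℤ) % 2 = (i - j) % 2
        then 1 else 0 := by
  split_ifs with h <;> rw [nonvanishing_condition_iff] at h
  · obtain ⟨⟨hij, hpar, hlow⟩, hhigh⟩ := h
    obtain ⟨p₀, hp₀⟩ := exists_isNormalForm_true hij hpar hlow hhigh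
    exact finrank_pathComp_eq_one hp₀ hlow hhigh
  · by_cases hvalley : ∃ p : PathIdx N i j k, IsNormalForm true p.1
    · obtain ⟨p, hp⟩ := hvalley
      exact finrank_pathComp_eq_zero false fun q hq =>
        h ⟨bounds_of_isNormalForm_true hp, le_of_isNormalForm_false hq⟩
    · exact finrank_pathComp_eq_zero true (not_exists.1 hvalley)

/-- `dim_F e_i Γ_k e_j = 1` if `|i−j| ≤ k ≤ N−1−|N+1−i−j|` and `k ≡ i−j (mod 2)`,
and `= 0` otherwise. -/
theorem stmt6 (F : Type*) [Field F] (N : ℕ) (hN : 1 ≤ N) (i j : ℤ)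
    (hi : 1 ≤ i) (hiN : i ≤ (N : ℤ)) (hj : 1 ≤ j) (hjN : j ≤ (N : ℤ)) (k : ℕ) :
    Module.finrank F (PathComp F N i j k) =
      if |i - j| ≤ (k : ℤ) ∧ (k : ℤ) ≤ (N : ℤ) - 1 - |(N : ℤ) + 1 - i - j|
          ∧ (k : ℤ) % 2 = (i - j) % 2
        then 1 else 0 :=
  stmt6_general F N i j k
end

section
/- Let C be an additive category and P₁,…,P_N objects with morphisms fᵢ: Pᵢ → P_{i+1}, fᵢ*: P_{i+1} → Pᵢ satisfying fᵢ*fᵢ + f_{i-1}f_{i-1}* = 0 (2 ≤ i ≤ N−1), f₁*f₁f₁* = 0, and f_{N-1}f_{N-1}*f_{N-1} = 0. Consider the two squares of morphisms: (1) from P_{N-1-i} ⊕ P_{N+1-i} → P_{N-i} (via [f_{N-1-i}, f_{N-i}*]) and P_{N-i} → P_{N-i} (via (−1)^{N-i} f_{N-i}* f_{N-i}), the vertical maps [0,1] then (−1)^{N-i}f_{N-i}; and (2) the analogous square with vertical maps [1,0] then (−1)^{N-1-i}f_{N-1-i}*. Then the difference of the two composite chain maps is null-homotopic via the homotopy s =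 (−1)^{N-i}·id on P_{N-i} (i.e., the difference of the vertical maps equals s∘d + d∘s for the given differentials). -/
open CategoryTheory Limits

/-- The key homotopy computation in the proof that `xᵢ ∘ xᵢ* = x_{i+1}* ∘ x_{i+1}`:
with `b = N-1-i`, differentials `d = [f_b, f_{b+1}*] : P_b ⊞ P_{b+2} ⟶ P_{b+1}` and
`d' = [f_b*; f_{b+1}] : P_{b+1} ⟶ P_b ⊞ P_{b+2}`, the difference of the two composite
vertical (chain) maps of the two diagrams is null-homotopic via
`s = (-1)^{N-i} · id` on `P_{b+1}`: in each degree it equals `d ≫ s`, resp. `s ≫ d'`. -/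
theorem stmt15 {C : Type*} [Category C] [Preadditive C] [HasBinaryBiproducts C]
    (N i : ℕ) (hN : 2 ≤ N) (hi : 1 ≤ i) (hiN : i ≤ N - 1)
    (P : ℤ → C) (f : ∀ j : ℤ, P j ⟶ P (j + 1)) (g : ∀ j : ℤ, P (j + 1) ⟶ P j)
    (hanti : ∀ j : ℤ, 1 ≤ j → j + 1 ≤ (N : ℤ) - 1 →
      f (j + 1) ≫ g (j + 1) + g j ≫ f j = 0)
    (h1 : g 1 ≫ f 1 ≫ g 1 = 0)
    (hN1 : f ((N : ℤ) - 1) ≫ g ((N : ℤ) - 1) ≫ f ((N : ℤ) - 1) = 0)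
    (b : ℤ) (hb : b = (N : ℤ) - 1 - i)
    -- the differentials
    (d : P b ⊞ P (b + 1 + 1) ⟶ P (b + 1)) (hd : d = biprod.desc (f b) (g (b + 1)))
    (d' : P (b + 1) ⟶ P b ⊞ P (b + 1 + 1)) (hd' : d' = biprod.lift (g b) (f (b + 1)))
    -- the homotopy
    (s : P (b + 1) ⟶ P (b + 1)) (hs : s = ((-1 : ℤ) ^ (N - i)) • 𝟙 (P (b + 1)))
    -- the vertical components of the composite chain map `X_i ∘ X_i*`
    (u₁X : P b ⊞ P (b + 1 + 1) ⟶ P (b + 1))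
    (hu₁X : u₁X = biprod.snd ≫ (((-1 : ℤ) ^ (N - i)) • g (b + 1)))
    (u₁Y : P (b + 1) ⟶ P b ⊞ P (b + 1 + 1))
    (hu₁Y : u₁Y = (((-1 : ℤ) ^ (N - i)) • f (b + 1)) ≫ biprod.inr)
    -- the vertical components of the composite chain map `X_{i+1}* ∘ X_{i+1}`
    (u₂X : P b ⊞ P (b + 1 + 1) ⟶ P (b + 1))
    (hu₂X : u₂X = biprod.fst ≫ (((-1 : ℤ) ^ (N - 1 - i)) • f b))
    (u₂Y : P (b + 1) ⟶ P b ⊞ P (b + 1 + 1))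
    (hu₂Y : u₂Y = (((-1 : ℤ) ^ (N - 1 - i)) • g b) ≫ biprod.inl) :
    u₁X - u₂X = d ≫ s ∧ u₁Y - u₂Y = s ≫ d' := by
  have hε : ((-1 : ℤ) ^ (N - 1 - i)) = -((-1 : ℤ) ^ (N - i)) := by
    have h : N - i = (N - 1 - i) + 1 := by omega
    rw [h, pow_succ]; ring
  subst hd hd' hs hu₁X hu₁Y hu₂X hu₂Y
  constructor
  · apply biprod.hom_ext' <;> simp [hε]
  · apply biprod.hom_ext <;> simp [hε]
end
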